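/- The context subcontracting relation ⊑⁻ on contracts is transitive: if C ⊑⁻ C' and C' ⊑⁻ D, then C ⊑⁻ D, provided the underlying predicate-implication relation ≤ of the environment Γ is transitive. -/
import Mathlib


namespace LambdaCon

/-- First-order constants. -/
inductive Const : Type
  | bool : Bool → Const
  | num  : Nat → Const
deriving DecidableEq

/-- Blame identifiers: source-level blame labels ♭ and blame variables ι. -/
inductive BlameId : Type
  | lbl : Nat → BlameId
  | var : Nat → BlameId
deriving DecidableEq

mutual
  /-- Terms of λCon (with the intermediate and subset-level extensions). -/
  inductive Term : Type
    | const      : Const → Term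
    | var        : String → Term
    | lam        : String → Term → Term
    | app        : Term → Term → Term
    | op         : String → Term → Term → Term
    | ite        : Term → Term → Term → Term
    | assert     : Term → BlameId → Contract → Term          -- M @b C
    | evalAssert : Term → Nat → Term → Term                  -- V @ι (eval M)
    | blame      : Nat → Term                                -- blame^♭
    | posBlame   : Nat → Term                                -- +blame^♭
    | negBlame   : Nat → Term                                -- −blame^♭
    | par        : Term → Term → Term                        -- parallel observation M || N

  /-- Contracts. -/
  inductive Contract : Type
    | flat  : Term → Contract
    | fn    : Contract → Contract → Contract
    | dep   : String → Contract → Contract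
    | inter : Contract → Contract → Contract
    | union : Contract → Contract → Contract
    | top   : Contract
    | bot   : Contract
end

mutual
  def beqT : Term → Term → Bool
    | .const k, .const k' => k == k'
    | .var x, .var y => x == y
    | .lam x M, .lam y N => x == y && beqT M N
    | .app a b, .app c d => beqT a c && beqT b d
    | .op o a b, .op o' c d => o == o' && beqT a c && beqT b d
    | .ite a b c, .ite d e f => beqT a d && beqT b e && beqT c f
    | .assert M b C, .assert N b' D => beqT M N && (b == b') && beqC C D
    | .evalAssert V i M, .evalAssert W j N => beqT V W && (i == j) && beqT M N
    | .blame l, .blame l' => l == l'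
    | .posBlame l, .posBlame l' => l == l'
    | .negBlame l, .negBlame l' => l == l'
    | .par a b, .par c d => beqT a c && beqT b d
    | _, _ => false
  def beqC : Contract → Contract → Bool
    | .flat M, .flat N => beqT M N
    | .fn a b, .fn c d => beqC a c && beqC b d
    | .dep x C, .dep y D => x == y && beqC C D
    | .inter a b, .inter c d => beqC a c && beqC b d
    | .union a b, .union c d => beqC a c && beqC b d
    | .top, .top => true
    | .bot, .bot => true
    | _, _ => false
end

instance : BEq Term := ⟨beqT⟩
instance : BEq Contract := ⟨beqC⟩

mutual
  /-- Capture-permitting substitution M[x ↦ N] on terms. -/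
  def substT : Term → String → Term → Term
    | .const k, _, _ => .const k
    | .var y, x, N => if y = x then N else .var y
    | .lam y M, x, N => if y = x then .lam y M else .lam y (substT M x N)
    | .app M₁ M₂, x, N => .app (substT M₁ x N) (substT M₂ x N)
    | .op o M₁ M₂, x, N => .op o (substT M₁ x N) (substT M₂ x N)
    | .ite L M₁ M₂, x, N => .ite (substT L x N) (substT M₁ x N) (substT M₂ x N)
    | .assert M b C, x, N => .assert (substT M x N) b (substC C x N)
    | .evalAssert V ι M, x, N => .evalAssert (substT V x N) ι (substT M x N)
    | .blame ℓ, _, _ => .blame ℓ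
    | .posBlame ℓ, _, _ => .posBlame ℓ
    | .negBlame ℓ, _, _ => .negBlame ℓ
    | .par M₁ M₂, x, N => .par (substT M₁ x N) (substT M₂ x N)
  /-- Substitution C[x ↦ N] on contracts. -/
  def substC : Contract → String → Term → Contract
    | .flat M, x, N => .flat (substT M x N)
    | .fn C D, x, N => .fn (substC C x N) (substC D x N)
    | .dep y C, x, N => if y = x then .dep y C else .dep y (substC C x N)
    | .inter C D, x, N => .inter (substC C x N) (substC D x N)
    | .union C D, x, N => .union (substC C x N) (substC D x N)
    | .top, _, _ => .top
    | .bot, _, _ => .bot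
end

mutual
  /-- Free variables of a term. -/
  def fvT : Term → List String
    | .const _ => []
    | .var y => [y]
    | .lam y M => (fvT M).filter (· ≠ y)
    | .app M₁ M₂ => fvT M₁ ++ fvT M₂
    | .op _ M₁ M₂ => fvT M₁ ++ fvT M₂
    | .ite L M₁ M₂ => fvT L ++ fvT M₁ ++ fvT M₂
    | .assert M _ C => fvT M ++ fvC C
    | .evalAssert V _ M => fvT V ++ fvT M
    | .blame _ => []
    | .posBlame _ => []
    | .negBlame _ => []
    | .par M₁ M₂ => fvT M₁ ++ fvT M₂
  def fvC : Contract → List String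
    | .flat M => fvT M
    | .fn C D => fvC C ++ fvC D
    | .dep y C => (fvC C).filter (· ≠ y)
    | .inter C D => fvC C ++ fvC D
    | .union C D => fvC C ++ fvC D
    | .top => []
    | .bot => []
end

/-- A term is closed if it has no free variables. -/
def Closed (M : Term) : Prop := fvT M = []

/-- Delayed contracts Q: function, dependent, and intersections thereof. -/
inductive Delayed : Contract → Prop
  | fn    : ∀ C D, Delayed (.fn C D)
  | dep   : ∀ x C, Delayed (.dep x C)
  | inter : ∀ Q R, Delayed Q → Delayed R → Delayed (.inter Q R)

/-- Immediate (flat) contracts I. -/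
inductive Immediate : Contract → Prop
  | flat : ∀ M, Immediate (.flat M)

/-- Values of λCon. -/
inductive IsValue : Term → Prop
  | const  : ∀ k, IsValue (.const k)
  | lam    : ∀ x M, IsValue (.lam x M)
  | assert : ∀ V ι Q, IsValue V → Delayed Q → IsValue (.assert V (.var ι) Q)

/-- Erase all (delayed) contract monitors from a value. -/
def unwrap : Term → Term
  | .assert V _ _ => unwrap V
  | V => V

/-- Convert a value into a truth value (everything but `false` counts as true). -/
def truthOf : Term → Bool
  | .const (.bool b) => b
  | _ => true

end LambdaCon
namespace LambdaCon

/-- Predicate-implication environments Γ: M ≤ N means predicate M implies N. -/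
abbrev PredEnv := Term → Term → Prop

mutual
  /-- Context subcontracting C ⊑⁻ D: C restricts the context more than D. -/
  inductive CtxSub (Γ : PredEnv) : Contract → Contract → Prop
    | refl : ∀ C, CtxSub Γ C C
    | flat : ∀ M N, CtxSub Γ (.flat M) (.flat N)
    | fn : ∀ {CD CR DD DR}, SubjSub Γ CD DD → CtxSub Γ CR DR →
        CtxSub Γ (.fn CD CR) (.fn DD DR)
    | dep : ∀ {C D} x, CtxSub Γ C D → CtxSub Γ (.dep x C) (.dep x D)
    | interL : ∀ {CL CR D}, CtxSub Γ CL D → CtxSub Γ CR D →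
        CtxSub Γ (.inter CL CR) D
    | interR₁ : ∀ {C DL} DR, CtxSub Γ C DL → CtxSub Γ C (.inter DL DR)
    | interR₂ : ∀ {C DR} DL, CtxSub Γ C DR → CtxSub Γ C (.inter DL DR)
    | unionL₁ : ∀ {CL D} CR, CtxSub Γ CL D → CtxSub Γ (.union CL CR) D
    | unionL₂ : ∀ {CR D} CL, CtxSub Γ CR D → CtxSub Γ (.union CL CR) D
    | unionR : ∀ {C DL DR}, CtxSub Γ C DL → CtxSub Γ C DR →
        CtxSub Γ C (.union DL DR)

  /-- Subject subcontracting C ⊑⁺ D: the subject obligations of C are more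
      restrictive than those of D. -/
  inductive SubjSub (Γ : PredEnv) : Contract → Contract → Prop
    | refl : ∀ C, SubjSub Γ C C
    | top : ∀ C, SubjSub Γ C .top
    | bot : ∀ D, SubjSub Γ .bot D
    | flat : ∀ {M N}, Γ M N → SubjSub Γ (.flat M) (.flat N)
    | fn : ∀ {CD CR DD DR}, CtxSub Γ CD DD → SubjSub Γ CR DR →
        SubjSub Γ (.fn CD CR) (.fn DD DR)
    | dep : ∀ {C D} x, SubjSub Γ C D → SubjSub Γ (.dep x C) (.dep x D)
    | interL₁ : ∀ {CL D} CR, SubjSub Γ CL D → SubjSub Γ (.inter CL CR) D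
    | interL₂ : ∀ {CR D} CL, SubjSub Γ CR D → SubjSub Γ (.inter CL CR) D
    | interR : ∀ {C DL DR}, SubjSub Γ C DL → SubjSub Γ C DR →
        SubjSub Γ C (.inter DL DR)
    | unionL : ∀ {CL CR D}, SubjSub Γ CL D → SubjSub Γ CR D →
        SubjSub Γ (.union CL CR) D
    | unionR₁ : ∀ {C DL} DR, SubjSub Γ C DL → SubjSub Γ C (.union DL DR)
    | unionR₂ : ∀ {C DR} DL, SubjSub Γ C DR → SubjSub Γ C (.union DL DR)
end

/-- Naive subcontracting C ⊑* D: covariant for context and subject. -/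
def NaiveSub (Γ : PredEnv) (C D : Contract) : Prop :=
  CtxSub Γ C D ∧ SubjSub Γ C D

/-- Ordinary subcontracting C ⊑ D: contravariant for the context portion and
    covariant for the subject portion. -/
def OrdSub (Γ : PredEnv) (C D : Contract) : Prop :=
  CtxSub Γ D C ∧ SubjSub Γ C D

end LambdaCon

namespace LambdaCon

mutual
  /-- Type-level derivations of context subcontracting. -/
  inductive CtxD (Γ : PredEnv) : Contract → Contract → Type
    | refl : ∀ C, CtxD Γ C C
    | flat : ∀ M N, CtxD Γ (.flat M) (.flat N)
    | fn : ∀ {CD CR DD DR}, SubjD Γ CD DD → CtxD Γ CR DR →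
        CtxD Γ (.fn CD CR) (.fn DD DR)
    | dep : ∀ {C D} x, CtxD Γ C D → CtxD Γ (.dep x C) (.dep x D)
    | interL : ∀ {CL CR D}, CtxD Γ CL D → CtxD Γ CR D → CtxD Γ (.inter CL CR) D
    | interR₁ : ∀ {C DL} DR, CtxD Γ C DL → CtxD Γ C (.inter DL DR)
    | interR₂ : ∀ {C DR} DL, CtxD Γ C DR → CtxD Γ C (.inter DL DR)
    | unionL₁ : ∀ {CL D} CR, CtxD Γ CL D → CtxD Γ (.union CL CR) D
    | unionL₂ : ∀ {CR D} CL, CtxD Γ CR D → CtxD Γ (.union CL CR) D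
    | unionR : ∀ {C DL DR}, CtxD Γ C DL → CtxD Γ C DR → CtxD Γ C (.union DL DR)

  /-- Type-level derivations of subject subcontracting. -/
  inductive SubjD (Γ : PredEnv) : Contract → Contract → Type
    | refl : ∀ C, SubjD Γ C C
    | top : ∀ C, SubjD Γ C .top
    | bot : ∀ D, SubjD Γ .bot D
    | flat : ∀ {M N}, Γ M N → SubjD Γ (.flat M) (.flat N)
    | fn : ∀ {CD CR DD DR}, CtxD Γ CD DD → SubjD Γ CR DR →
        SubjD Γ (.fn CD CR) (.fn DD DR)
    | dep : ∀ {C D} x, SubjD Γ C D → SubjD Γ (.dep x C) (.dep x D)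
    | interL₁ : ∀ {CL D} CR, SubjD Γ CL D → SubjD Γ (.inter CL CR) D
    | interL₂ : ∀ {CR D} CL, SubjD Γ CR D → SubjD Γ (.inter CL CR) D
    | interR : ∀ {C DL DR}, SubjD Γ C DL → SubjD Γ C DR → SubjD Γ C (.inter DL DR)
    | unionL : ∀ {CL CR D}, SubjD Γ CL D → SubjD Γ CR D → SubjD Γ (.union CL CR) D
    | unionR₁ : ∀ {C DL} DR, SubjD Γ C DL → SubjD Γ C (.union DL DR)
    | unionR₂ : ∀ {C DR} DL, SubjD Γ C DR → SubjD Γ C (.union DL DR)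
end

mutual
  /-- Cut / transitivity on context derivations. -/
  def ctxTrans (Γ : PredEnv) (hΓ : ∀ M N L, Γ M N → Γ N L → Γ M L) :
      ∀ {C C' D : Contract}, (h₁ : CtxD Γ C C') → (h₂ : CtxD Γ C' D) → CtxD Γ C D
    | _, _, _, h₁, .refl _ => h₁
    | _, _, _, .refl _, h₂ => h₂
    | _, _, _, .interL a b, h₂ => .interL (ctxTrans Γ hΓ a h₂) (ctxTrans Γ hΓ b h₂)
    | _, _, _, .unionL₁ CR a, h₂ => .unionL₁ CR (ctxTrans Γ hΓ a h₂)
    | _, _, _, .unionL₂ CL a, h₂ => .unionL₂ CL (ctxTrans Γ hΓ a h₂)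
    | _, _, _, h₁, .interR₁ DR a => .interR₁ DR (ctxTrans Γ hΓ h₁ a)
    | _, _, _, h₁, .interR₂ DL a => .interR₂ DL (ctxTrans Γ hΓ h₁ a)
    | _, _, _, h₁, .unionR a b => .unionR (ctxTrans Γ hΓ h₁ a) (ctxTrans Γ hΓ h₁ b)
    | _, _, _, .flat M _, .flat _ N => .flat M N
    | _, _, _, .fn s c, .fn s' c' =>
        .fn (subjTrans Γ hΓ s s') (ctxTrans Γ hΓ c c')
    | _, _, _, .dep x a, .dep _ b => .dep x (ctxTrans Γ hΓ a b)
    | _, _, _, .interR₁ _ a, .interL b _ => ctxTrans Γ hΓ a b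
    | _, _, _, .interR₂ _ a, .interL _ b => ctxTrans Γ hΓ a b
    | _, _, _, .unionR a _, .unionL₁ _ b => ctxTrans Γ hΓ a b
    | _, _, _, .unionR _ a, .unionL₂ _ b => ctxTrans Γ hΓ a b
  termination_by C C' D h₁ h₂ => sizeOf h₁ + sizeOf h₂

  /-- Cut / transitivity on subject derivations. -/
  def subjTrans (Γ : PredEnv) (hΓ : ∀ M N L, Γ M N → Γ N L → Γ M L) :
      ∀ {C C' D : Contract}, (h₁ : SubjD Γ C C') → (h₂ : SubjD Γ C' D) → SubjD Γ C D
    | _, _, _, h₁, .refl _ => h₁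
    | _, _, _, .refl _, h₂ => h₂
    | _, _, _, _, .top _ => .top _
    | _, _, _, .bot _, _ => .bot _
    | _, _, _, .interL₁ CR a, h₂ => .interL₁ CR (subjTrans Γ hΓ a h₂)
    | _, _, _, .interL₂ CL a, h₂ => .interL₂ CL (subjTrans Γ hΓ a h₂)
    | _, _, _, .unionL a b, h₂ => .unionL (subjTrans Γ hΓ a h₂) (subjTrans Γ hΓ b h₂)
    | _, _, _, h₁, .interR a b => .interR (subjTrans Γ hΓ h₁ a) (subjTrans Γ hΓ h₁ b)
    | _, _, _, h₁, .unionR₁ DR a => .unionR₁ DR (subjTrans Γ hΓ h₁ a)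
    | _, _, _, h₁, .unionR₂ DL a => .unionR₂ DL (subjTrans Γ hΓ h₁ a)
    | _, _, _, .flat p, .flat q => .flat (hΓ _ _ _ p q)
    | _, _, _, .fn c s, .fn c' s' =>
        .fn (ctxTrans Γ hΓ c c') (subjTrans Γ hΓ s s')
    | _, _, _, .dep x a, .dep _ b => .dep x (subjTrans Γ hΓ a b)
    | _, _, _, .interR a _, .interL₁ _ b => subjTrans Γ hΓ a b
    | _, _, _, .interR _ a, .interL₂ _ b => subjTrans Γ hΓ a b
    | _, _, _, .unionR₁ _ a, .unionL b _ => subjTrans Γ hΓ a b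
    | _, _, _, .unionR₂ _ a, .unionL _ b => subjTrans Γ hΓ a b
  termination_by C C' D h₁ h₂ => sizeOf h₁ + sizeOf h₂
end

mutual
  /-- Soundness of context derivations. -/
  def ctxD_sound {Γ : PredEnv} : ∀ {C D : Contract}, CtxD Γ C D → CtxSub Γ C D
    | _, _, .refl C => .refl C
    | _, _, .flat M N => .flat M N
    | _, _, .fn s c => .fn (subjD_sound s) (ctxD_sound c)
    | _, _, .dep x a => .dep x (ctxD_sound a)
    | _, _, .interL a b => .interL (ctxD_sound a) (ctxD_sound b)
    | _, _, .interR₁ DR a => .interR₁ DR (ctxD_sound a)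
    | _, _, .interR₂ DL a => .interR₂ DL (ctxD_sound a)
    | _, _, .unionL₁ CR a => .unionL₁ CR (ctxD_sound a)
    | _, _, .unionL₂ CL a => .unionL₂ CL (ctxD_sound a)
    | _, _, .unionR a b => .unionR (ctxD_sound a) (ctxD_sound b)

  /-- Soundness of subject derivations. -/
  def subjD_sound {Γ : PredEnv} : ∀ {C D : Contract}, SubjD Γ C D → SubjSub Γ C D
    | _, _, .refl C => .refl C
    | _, _, .top C => .top C
    | _, _, .bot D => .bot D
    | _, _, .flat p => .flat p
    | _, _, .fn c s => .fn (ctxD_sound c) (subjD_sound s)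
    | _, _, .dep x a => .dep x (subjD_sound a)
    | _, _, .interL₁ CR a => .interL₁ CR (subjD_sound a)
    | _, _, .interL₂ CL a => .interL₂ CL (subjD_sound a)
    | _, _, .interR a b => .interR (subjD_sound a) (subjD_sound b)
    | _, _, .unionL a b => .unionL (subjD_sound a) (subjD_sound b)
    | _, _, .unionR₁ DR a => .unionR₁ DR (subjD_sound a)
    | _, _, .unionR₂ DL a => .unionR₂ DL (subjD_sound a)
end

/-- Completeness: every `CtxSub` proof is witnessed by some derivation tree. -/
theorem ctxSub_toD {Γ : PredEnv} {C D : Contract} (h : CtxSub Γ C D) :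
    Nonempty (CtxD Γ C D) :=
  CtxSub.rec (Γ := Γ)
    (motive_1 := fun C D _ => Nonempty (CtxD Γ C D))
    (motive_2 := fun C D _ => Nonempty (SubjD Γ C D))
    (fun C => ⟨.refl C⟩)
    (fun M N => ⟨.flat M N⟩)
    (fun _ _ ⟨a⟩ ⟨b⟩ => ⟨.fn a b⟩)
    (fun x _ ⟨a⟩ => ⟨.dep x a⟩)
    (fun _ _ ⟨a⟩ ⟨b⟩ => ⟨.interL a b⟩)
    (fun DR _ ⟨a⟩ => ⟨.interR₁ DR a⟩)
    (fun DL _ ⟨a⟩ => ⟨.interR₂ DL a⟩)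
    (fun CR _ ⟨a⟩ => ⟨.unionL₁ CR a⟩)
    (fun CL _ ⟨a⟩ => ⟨.unionL₂ CL a⟩)
    (fun _ _ ⟨a⟩ ⟨b⟩ => ⟨.unionR a b⟩)
    (fun C => ⟨.refl C⟩)
    (fun C => ⟨.top C⟩)
    (fun D => ⟨.bot D⟩)
    (fun p => ⟨.flat p⟩)
    (fun _ _ ⟨a⟩ ⟨b⟩ => ⟨.fn a b⟩)
    (fun x _ ⟨a⟩ => ⟨.dep x a⟩)
    (fun CR _ ⟨a⟩ => ⟨.interL₁ CR a⟩)
    (fun CL _ ⟨a⟩ => ⟨.interL₂ CL a⟩)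
    (fun _ _ ⟨a⟩ ⟨b⟩ => ⟨.interR a b⟩)
    (fun _ _ ⟨a⟩ ⟨b⟩ => ⟨.unionL a b⟩)
    (fun DR _ ⟨a⟩ => ⟨.unionR₁ DR a⟩)
    (fun DL _ ⟨a⟩ => ⟨.unionR₂ DL a⟩)
    h

/-- **Transitivity of context subcontracting**: if C ⊑⁻ C' and C' ⊑⁻ D then
C ⊑⁻ D, provided the predicate-implication relation ≤ of Γ is transitive. -/
theorem ctxSub_trans (Γ : PredEnv)
    (hΓ : ∀ M N L, Γ M N → Γ N L → Γ M L)
    {C C' D : Contract} (h₁ : CtxSub Γ C C') (h₂ : CtxSub Γ C' D) :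
    CtxSub Γ C D := by
  obtain ⟨d₁⟩ := ctxSub_toD h₁
  obtain ⟨d₂⟩ := ctxSub_toD h₂
  exact ctxD_sound (ctxTrans Γ hΓ d₁ d₂)

end LambdaCon
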